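/- arXiv:1506.05450 — 3 statements merged into one kernel-verified Lean document; each statement's English description precedes it below -/
import Mathlib

section
/- Let X and Y be Banach spaces and L : X → Y a bounded linear operator. Then χ(L(S_X)) = χ(L(B_X)), where S_X is the unit sphere and B_X the closed unit ball of X, and χ is the Hausdorff measure of noncompactness, provided X is nontrivial. -/
/-!
A finite ε-net `N` of a set `A` in a real normed space puts `A` inside `N + ball 0 ε`, hence
`convexHull A` inside `convexHull N + ball 0 ε`; as `convexHull N` is compact, it has a finite
δ-net for every `δ > 0`, so `χ(convexHull A) ≤ χ(A)`. In a nontrivial space the closed unit ball is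
the convex hull of the unit sphere, and a linear map commutes with convex hulls, so
`χ(L(B_X)) ≤ χ(L(S_X))`; the reverse inequality is monotonicity of `χ`.
-/

/-- The Hausdorff measure of noncompactness:
`χ(Q) = inf {ε > 0 : Q has a finite ε-net in X}`. -/
noncomputable def hausdorffMNC {X : Type*} [MetricSpace X] (Q : Set X) : ℝ :=
  sInf {ε : ℝ | 0 < ε ∧ ∃ S : Finset X, ∀ x ∈ Q, ∃ s ∈ S, dist x s < ε}

open Metric Set Bornology
open scoped Pointwise

def HasFiniteNet {X : Type*} [PseudoMetricSpace X] (Q : Set X) (ε : ℝ) : Prop :=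
  ∃ S : Finset X, ∀ x ∈ Q, ∃ s ∈ S, dist x s < ε

section PseudoMetric

variable {X : Type*} [PseudoMetricSpace X] {Q Q' : Set X} {ε : ℝ}

theorem HasFiniteNet.mono (h : HasFiniteNet Q' ε) (hQ : Q ⊆ Q') : HasFiniteNet Q ε :=
  let ⟨S, hS⟩ := h
  ⟨S, fun x hx => hS x (hQ hx)⟩

theorem IsCompact.hasFiniteNet (hQ : IsCompact Q) (hε : 0 < ε) : HasFiniteNet Q ε := by
  obtain ⟨t, htf, hcover⟩ := totallyBounded_iff.mp hQ.totallyBounded ε hε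
  refine ⟨htf.toFinset, fun x hx => ?_⟩
  obtain ⟨s, hs, hxs⟩ := mem_iUnion₂.mp (hcover hx)
  exact ⟨s, htf.mem_toFinset.mpr hs, hxs⟩

theorem Bornology.IsBounded.exists_hasFiniteNet (hQ : IsBounded Q) :
    ∃ ε, 0 < ε ∧ HasFiniteNet Q ε := by
  rcases Q.eq_empty_or_nonempty with rfl | ⟨c, -⟩
  · exact ⟨1, one_pos, ∅, by simp⟩
  · obtain ⟨r, hr, hQr⟩ := hQ.subset_ball_lt 0 c
    exact ⟨r, hr, {c}, fun x hx => ⟨c, Finset.mem_singleton_self c, hQr hx⟩⟩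

end PseudoMetric

section Metric

variable {X : Type*} [MetricSpace X] {Q Q' : Set X} {ε c : ℝ}

theorem hausdorffMNC_le (hε : 0 < ε) (h : HasFiniteNet Q ε) : hausdorffMNC Q ≤ ε :=
  csInf_le ⟨0, fun _ hδ => hδ.1.le⟩ ⟨hε, h⟩

theorem le_hausdorffMNC (hQ : IsBounded Q) (h : ∀ ε, 0 < ε → HasFiniteNet Q ε → c ≤ ε) :
    c ≤ hausdorffMNC Q :=
  le_csInf hQ.exists_hasFiniteNet fun ε hε => h ε hε.1 hε.2

theorem hausdorffMNC_mono (hQ' : IsBounded Q') (hQ : Q ⊆ Q') :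
    hausdorffMNC Q ≤ hausdorffMNC Q' :=
  le_hausdorffMNC hQ' fun _ hε hnet => hausdorffMNC_le hε (hnet.mono hQ)

end Metric

section Normed

variable {E : Type*} [NormedAddCommGroup E] {K Q : Set E} {ε δ : ℝ}

theorem HasFiniteNet.exists_subset_add_ball (h : HasFiniteNet Q ε) :
    ∃ N : Finset E, Q ⊆ (N : Set E) + ball 0 ε := by
  obtain ⟨N, hN⟩ := h
  refine ⟨N, fun x hx => ?_⟩
  obtain ⟨s, hs, hxs⟩ := hN x hx
  exact ⟨s, hs, x - s, by rwa [mem_ball_zero_iff, ← dist_eq_norm], add_sub_cancel s x⟩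

theorem HasFiniteNet.add_ball (h : HasFiniteNet K δ) : HasFiniteNet (K + ball 0 ε) (ε + δ) := by
  obtain ⟨N, hN⟩ := h
  refine ⟨N, ?_⟩
  rintro _ ⟨k, hk, b, hb, rfl⟩
  obtain ⟨s, hs, hks⟩ := hN k hk
  refine ⟨s, hs, ?_⟩
  calc dist (k + b) s ≤ dist (k + b) k + dist k s := dist_triangle _ _ _
    _ = ‖b‖ + dist k s := by rw [dist_eq_norm, add_sub_cancel_left]
    _ < ε + δ := add_lt_add (mem_ball_zero_iff.mp hb) hks

variable [NormedSpace ℝ E]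

theorem HasFiniteNet.convexHull (h : HasFiniteNet Q ε) (hδ : 0 < δ) :
    HasFiniteNet (convexHull ℝ Q) (ε + δ) := by
  obtain ⟨N, hN⟩ := h.exists_subset_add_ball
  have hhull : _root_.convexHull ℝ Q ⊆ _root_.convexHull ℝ (N : Set E) + ball 0 ε := by
    rw [← (convex_ball (0 : E) ε).convexHull_eq, ← convexHull_add]
    exact convexHull_mono hN
  exact (((N.finite_toSet.isCompact_convexHull (𝕜 := ℝ)).hasFiniteNet hδ).add_ball).mono hhull

theorem hausdorffMNC_convexHull_le (hQ : IsBounded Q) :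
    hausdorffMNC (convexHull ℝ Q) ≤ hausdorffMNC Q :=
  le_hausdorffMNC hQ fun _ hε hnet => le_of_forall_pos_le_add fun _ hδ =>
    hausdorffMNC_le (add_pos hε hδ) (hnet.convexHull hδ)

end Normed

theorem chi_image_sphere_eq_chi_image_ball_general {X Y : Type*}
    [NormedAddCommGroup X] [NormedSpace ℝ X] [Nontrivial X]
    [NormedAddCommGroup Y] [NormedSpace ℝ Y]
    (L : X →L[ℝ] Y) :
    hausdorffMNC (L '' Metric.sphere 0 1) = hausdorffMNC (L '' Metric.closedBall 0 1) := by
  have hS : IsBounded (L '' sphere 0 1) := L.lipschitz.isBounded_image isBounded_sphere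
  have hB : IsBounded (L '' closedBall 0 1) := L.lipschitz.isBounded_image isBounded_closedBall
  refine le_antisymm (hausdorffMNC_mono hB (image_mono sphere_subset_closedBall)) ?_
  calc hausdorffMNC (L '' closedBall 0 1)
      = hausdorffMNC (convexHull ℝ (L '' sphere 0 1)) := by
        rw [← convexHull_sphere_eq_closedBall 0 zero_le_one, ← L.coe_coe,
          LinearMap.image_convexHull]
    _ ≤ hausdorffMNC (L '' sphere 0 1) := hausdorffMNC_convexHull_le hS

theorem chi_image_sphere_eq_chi_image_ball {X Y : Type*}
    [NormedAddCommGroup X] [NormedSpace ℝ X] [CompleteSpace X] [Nontrivial X]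
    [NormedAddCommGroup Y] [NormedSpace ℝ Y] [CompleteSpace Y]
    (L : X →L[ℝ] Y) :
    hausdorffMNC (L '' Metric.sphere 0 1) = hausdorffMNC (L '' Metric.closedBall 0 1) :=
  chi_image_sphere_eq_chi_image_ball_general L
end

section
/- Let Q be a bounded subset of c₀, and for r ∈ ℕ let P_r : c₀ → c₀ be the projection P_r(x) = (x_0, x_1, …, x_r, 0, 0, …). Then the Hausdorff measure of noncompactness of Q satisfies χ(Q) = lim_{r→∞} sup_{x ∈ Q} ‖(I − P_r)(x)‖_∞. -/
/-!
Every `x` lies within `‖(I - P_r) x‖` of `P_r x`, and `P_r(Q)` is a bounded subset of an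
`(r + 1)`-dimensional space, hence totally bounded; so `χ(Q)` is at most every term of the
sequence. Conversely, given a finite `ε`-net `S` of `Q`, the tails of the finitely many points of
`S` are eventually below any `δ > 0`, and the tail norm is `1`-Lipschitz, so the terms are
eventually at most `ε + δ`.
-/

open Filter

/-- The Banach space `c₀` of real null sequences with the supremum norm, realized as a
(metric) subspace of `ℓ∞`. -/
abbrev c0Space : Type :=
  {x : lp (fun _ : ℕ => ℝ) (⊤ : ENNReal) // Tendsto (fun n => x n) atTop (nhds 0)}

open Topology Metric
open scoped lp ENNReal

section hausdorffMNC

variable {X : Type*} [MetricSpace X] {Q : Set X}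

lemma hausdorffMNC_le_of_net {ε : ℝ} (hε : 0 < ε) (S : Finset X)
    (hS : ∀ x ∈ Q, ∃ s ∈ S, dist x s < ε) : hausdorffMNC Q ≤ ε :=
  csInf_le ⟨0, fun _ h => h.1.le⟩ ⟨hε, S, hS⟩

lemma Bornology.IsBounded.exists_finite_net (hQ : Bornology.IsBounded Q) :
    {ε : ℝ | 0 < ε ∧ ∃ S : Finset X, ∀ x ∈ Q, ∃ s ∈ S, dist x s < ε}.Nonempty := by
  rcases Q.eq_empty_or_nonempty with rfl | ⟨x₀, -⟩
  · exact ⟨1, one_pos, ∅, by simp⟩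
  · obtain ⟨R, hR⟩ := (isBounded_iff_subset_ball x₀).1 hQ
    refine ⟨max R 1, by positivity, {x₀}, fun x hx => ⟨x₀, Finset.mem_singleton_self _, ?_⟩⟩
    exact (mem_ball.1 (hR hx)).trans_le (le_max_left _ _)

lemma hausdorffMNC_le_of_totallyBounded {K : Set X} (hK : TotallyBounded K) {d : ℝ}
    (hd : 0 ≤ d) (hQK : ∀ x ∈ Q, ∃ k ∈ K, dist x k ≤ d) : hausdorffMNC Q ≤ d := by
  refine le_of_forall_pos_le_add fun δ hδ => ?_
  obtain ⟨t, ht, hKt⟩ := totallyBounded_iff.1 hK δ hδ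
  refine hausdorffMNC_le_of_net (by positivity) ht.toFinset fun x hx => ?_
  obtain ⟨k, hk, hxk⟩ := hQK x hx
  obtain ⟨s, hs, hks⟩ := Set.mem_iUnion₂.1 (hKt hk)
  exact ⟨s, ht.mem_toFinset.2 hs, (dist_triangle x k s).trans_lt (add_lt_add_of_le_of_lt hxk hks)⟩

end hausdorffMNC

section tailNorm

noncomputable def tailNorm (r : ℕ) (x : ℓ^∞(ℕ, ℝ)) : ℝ := ⨆ n : ℕ, |x (n + r + 1)|

variable (r : ℕ) (x y : ℓ^∞(ℕ, ℝ))

lemma abs_apply_le_norm (n : ℕ) : |x n| ≤ ‖x‖ := by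
  simpa using lp.norm_apply_le_norm ENNReal.top_ne_zero x n

lemma bddAbove_range_abs_apply_add : BddAbove (Set.range fun n : ℕ => |x (n + r + 1)|) :=
  ⟨‖x‖, by rintro t ⟨n, rfl⟩; exact abs_apply_le_norm x _⟩

lemma abs_apply_le_tailNorm (n : ℕ) : |x (n + r + 1)| ≤ tailNorm r x :=
  le_ciSup (bddAbove_range_abs_apply_add r x) n

lemma tailNorm_nonneg : 0 ≤ tailNorm r x :=
  (abs_nonneg _).trans (abs_apply_le_tailNorm r x 0)

lemma tailNorm_le_add_dist : tailNorm r x ≤ tailNorm r y + dist x y := by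
  refine ciSup_le fun n => ?_
  calc |x (n + r + 1)| ≤ |y (n + r + 1)| + |x (n + r + 1) - y (n + r + 1)| :=
        sub_le_iff_le_add'.1 (abs_sub_abs_le_abs_sub _ _)
    _ ≤ tailNorm r y + dist x y := by
        refine add_le_add (abs_apply_le_tailNorm r y n) ?_
        simpa [dist_eq_norm] using abs_apply_le_norm (x - y) (n + r + 1)

lemma lipschitzWith_tailNorm : LipschitzWith 1 (tailNorm r) :=
  LipschitzWith.of_le_add (tailNorm_le_add_dist r)

lemma tendsto_tailNorm (hx : Tendsto (fun n => x n) atTop (𝓝 0)) :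
    Tendsto (fun r => tailNorm r x) atTop (𝓝 0) := by
  refine tendsto_order.2
    ⟨fun a ha => .of_forall fun r => ha.trans_le (tailNorm_nonneg r x), fun b hb => ?_⟩
  obtain ⟨N, hN⟩ := Metric.tendsto_atTop.1 hx (b / 2) (half_pos hb)
  filter_upwards [eventually_ge_atTop N] with r hr
  refine (ciSup_le fun n => ?_).trans_lt (half_lt_self hb)
  simpa [Real.dist_eq] using (hN (n + r + 1) (by omega)).le

end tailNorm

namespace c0Space

noncomputable def ofFin (r : ℕ) (v : Fin (r + 1) → ℝ) : c0Space :=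
  ⟨⟨fun n => if h : n < r + 1 then v ⟨n, h⟩ else 0,
    memℓp_infty ⟨‖v‖, by
      rintro t ⟨n, rfl⟩
      dsimp only
      split
      · exact norm_le_pi_norm v _
      · simp⟩⟩,
    tendsto_nhds_of_eventually_eq (by
      filter_upwards [eventually_ge_atTop (r + 1)] with n hn
      exact dif_neg (by omega))⟩

lemma ofFin_apply (r : ℕ) (v : Fin (r + 1) → ℝ) (n : ℕ) :
    (ofFin r v).1 n = if h : n < r + 1 then v ⟨n, h⟩ else 0 := rfl

def restrictFin (r : ℕ) (x : c0Space) : Fin (r + 1) → ℝ := fun i => x.1 i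

/-- The projection `P_r`. -/
noncomputable def truncate (r : ℕ) : c0Space → c0Space := ofFin r ∘ restrictFin r

variable (r : ℕ)

lemma lipschitzWith_ofFin : LipschitzWith 1 (ofFin r) := by
  refine LipschitzWith.of_dist_le_mul fun v w => ?_
  rw [NNReal.coe_one, one_mul, Subtype.dist_eq, dist_eq_norm]
  refine lp.norm_le_of_forall_le dist_nonneg fun n => ?_
  rw [lp.coeFn_sub, Pi.sub_apply, ofFin_apply, ofFin_apply]
  split
  · exact dist_le_pi_dist v w _
  · simp

lemma lipschitzWith_restrictFin : LipschitzWith 1 (restrictFin r) := by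
  refine LipschitzWith.of_dist_le_mul fun x y => ?_
  rw [NNReal.coe_one, one_mul]
  refine (dist_pi_le_iff dist_nonneg).2 fun i => ?_
  rw [Real.dist_eq, Subtype.dist_eq, dist_eq_norm]
  simpa [restrictFin] using abs_apply_le_norm (x.1 - y.1) i

lemma dist_truncate_le (x : c0Space) : dist x (truncate r x) ≤ tailNorm r x.1 := by
  rw [Subtype.dist_eq, dist_eq_norm]
  refine lp.norm_le_of_forall_le (tailNorm_nonneg r x.1) fun n => ?_
  rw [lp.coeFn_sub, Pi.sub_apply, truncate, Function.comp_apply, ofFin_apply]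
  split
  · simpa [restrictFin] using tailNorm_nonneg r x.1
  · obtain ⟨m, rfl⟩ : ∃ m, n = m + r + 1 := ⟨n - (r + 1), by omega⟩
    simpa using abs_apply_le_tailNorm r x.1 m

lemma _root_.Bornology.IsBounded.totallyBounded_image_truncate {Q : Set c0Space}
    (hQ : Bornology.IsBounded Q) : TotallyBounded (truncate r '' Q) := by
  have hfin : TotallyBounded (restrictFin r '' Q) :=
    ((lipschitzWith_restrictFin r).isBounded_image hQ).isCompact_closure.totallyBounded.subset
      subset_closure
  rw [truncate, Set.image_comp]
  exact hfin.image (lipschitzWith_ofFin r).uniformContinuous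

end c0Space

section maxTailNorm

open c0Space

noncomputable def maxTailNorm (Q : Set c0Space) (r : ℕ) : ℝ :=
  sSup {t : ℝ | ∃ x ∈ Q, t = tailNorm r x.1}

variable {Q : Set c0Space} (r : ℕ)

lemma maxTailNorm_nonneg : 0 ≤ maxTailNorm Q r :=
  Real.sSup_nonneg (by rintro t ⟨x, -, rfl⟩; exact tailNorm_nonneg r x.1)

lemma tailNorm_le_maxTailNorm (hQ : Bornology.IsBounded Q) {x : c0Space} (hx : x ∈ Q) :
    tailNorm r x.1 ≤ maxTailNorm Q r := by
  have hbdd : BddAbove ((fun x : c0Space => tailNorm r x.1) '' Q) :=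
    (((lipschitzWith_tailNorm r).comp (LipschitzWith.subtype_val _)).isBounded_image hQ).bddAbove
  exact le_csSup (hbdd.mono (by rintro t ⟨x, hx, rfl⟩; exact ⟨x, hx, rfl⟩)) ⟨x, hx, rfl⟩

lemma hausdorffMNC_le_maxTailNorm (hQ : Bornology.IsBounded Q) :
    hausdorffMNC Q ≤ maxTailNorm Q r :=
  hausdorffMNC_le_of_totallyBounded (hQ.totallyBounded_image_truncate r) (maxTailNorm_nonneg r)
    fun x hx => ⟨truncate r x, Set.mem_image_of_mem _ hx,
      (dist_truncate_le r x).trans (tailNorm_le_maxTailNorm r hQ hx)⟩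

lemma maxTailNorm_le_of_net {ε δ : ℝ} (hε : 0 ≤ ε) (hδ : 0 ≤ δ) {S : Finset c0Space}
    (hS : ∀ x ∈ Q, ∃ s ∈ S, dist x s < ε) (hSδ : ∀ s ∈ S, tailNorm r s.1 ≤ δ) :
    maxTailNorm Q r ≤ ε + δ := by
  refine Real.sSup_le ?_ (add_nonneg hε hδ)
  rintro t ⟨x, hx, rfl⟩
  obtain ⟨s, hs, hxs⟩ := hS x hx
  calc tailNorm r x.1 ≤ tailNorm r s.1 + dist x s := tailNorm_le_add_dist r x.1 s.1
    _ ≤ ε + δ := by linarith [hSδ s hs]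

end maxTailNorm

/-- For a bounded `Q ⊆ c₀` and the projections `P_r(x) = (x_0, …, x_r, 0, 0, …)`,
one has `χ(Q) = lim_r sup_{x ∈ Q} ‖(I − P_r)(x)‖_∞`; note
`‖(I − P_r)(x)‖_∞ = sup_{n > r} |x_n|`. -/
theorem chi_c0_eq_lim (Q : Set c0Space) (hQ : Bornology.IsBounded Q) :
    Tendsto (fun r : ℕ =>
        sSup {t : ℝ | ∃ x ∈ Q, t = ⨆ n : ℕ, |x.1 (n + r + 1)|})
      atTop (nhds (hausdorffMNC Q)) := by
  change Tendsto (maxTailNorm Q) atTop (𝓝 (hausdorffMNC Q))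
  refine tendsto_order.2 ⟨fun a ha => .of_forall fun r =>
    ha.trans_le (hausdorffMNC_le_maxTailNorm r hQ), fun b hb => ?_⟩
  obtain ⟨ε, ⟨hε, S, hS⟩, hεb⟩ := exists_lt_of_csInf_lt hQ.exists_finite_net hb
  set δ := (b - ε) / 2 with hδ_def
  have hδ : 0 < δ := half_pos (sub_pos.2 hεb)
  have hS_tail : ∀ᶠ r in atTop, ∀ s ∈ S, tailNorm r s.1 < δ :=
    (eventually_all_finset S).2 fun s _ => (tendsto_order.1 (tendsto_tailNorm s.1 s.2)).2 δ hδ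
  filter_upwards [hS_tail] with r hr
  calc maxTailNorm Q r ≤ ε + δ := maxTailNorm_le_of_net r hε.le hδ.le hS fun s hs => (hr s hs).le
    _ < b := by linarith
end

section
/- Let Q be a bounded subset of the space c of convergent real sequences (with sup norm), and for r ∈ ℕ let P_r : c → c be the projection P_r(z) = z̄·e + Σ_{n=0}^{r} (z_n − z̄)·e^{(n)}, where z̄ = lim_n z_n, e = (1,1,1,…), and e^{(n)} is the n-th unit sequence. Then (1/2)·lim_{r→∞} sup_{z ∈ Q} ‖(I − P_r)(z)‖_∞ ≤ χ(Q) ≤ lim_{r→∞} sup_{z ∈ Q} ‖(I − P_r)(z)‖_∞. -/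
set_option synthInstance.maxHeartbeats 1000000
set_option maxHeartbeats 2000000

open Filter

/-- The Banach space `c` of convergent real sequences with the supremum norm, realized
as a (metric) subspace of `ℓ∞`. -/
abbrev convSeqSpace : Type :=
  {x : lp (fun _ : ℕ => ℝ) (⊤ : ENNReal) // ∃ l : ℝ, Tendsto (fun n => x n) atTop (nhds l)}

namespace ChiCAux

/-- The limit of a convergent sequence. -/
noncomputable def zbar (z : convSeqSpace) : ℝ := limUnder atTop (fun m => z.1 m)

lemma tendsto_zbar (z : convSeqSpace) : Tendsto (fun n => z.1 n) atTop (nhds (zbar z)) := by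
  obtain ⟨l, hl⟩ := z.2
  rwa [zbar, hl.limUnder_eq]

lemma abs_apply_le (z : convSeqSpace) (n : ℕ) : |z.1 n| ≤ ‖z.1‖ := by
  simpa using lp.norm_apply_le_norm (by norm_num) z.1 n

lemma abs_zbar_le (z : convSeqSpace) : |zbar z| ≤ ‖z.1‖ := by
  have : Tendsto (fun n => |z.1 n|) atTop (nhds |zbar z|) := (tendsto_zbar z).abs
  exact le_of_tendsto this (Eventually.of_forall fun n => abs_apply_le z n)

lemma dist_eq (z w : convSeqSpace) : dist z w = ‖z.1 - w.1‖ := by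
  rw [Subtype.dist_eq, dist_eq_norm]

lemma abs_sub_apply_le (z w : convSeqSpace) (n : ℕ) : |z.1 n - w.1 n| ≤ dist z w := by
  rw [dist_eq]
  have := lp.norm_apply_le_norm (p := (⊤ : ENNReal)) (by norm_num) (z.1 - w.1) n
  simpa using this

lemma abs_sub_zbar_le (z w : convSeqSpace) : |zbar z - zbar w| ≤ dist z w := by
  have : Tendsto (fun n => |z.1 n - w.1 n|) atTop (nhds |zbar z - zbar w|) :=
    ((tendsto_zbar z).sub (tendsto_zbar w)).abs
  exact le_of_tendsto this (Eventually.of_forall fun n => abs_sub_apply_le z w n)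

lemma dist_le {z w : convSeqSpace} {C : ℝ} (hC : 0 ≤ C)
    (h : ∀ n, |z.1 n - w.1 n| ≤ C) : dist z w ≤ C := by
  rw [dist_eq]
  refine lp.norm_le_of_forall_le hC fun n => ?_
  simpa using h n

/-- `g z r = sup_{n > r} |z n - z̄|`. -/
noncomputable def g (z : convSeqSpace) (r : ℕ) : ℝ := ⨆ n : ℕ, |z.1 (n + r + 1) - zbar z|

lemma g_bddAbove (z : convSeqSpace) (r : ℕ) :
    BddAbove (Set.range fun n : ℕ => |z.1 (n + r + 1) - zbar z|) := by
  refine ⟨‖z.1‖ + |zbar z|, ?_⟩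
  rintro t ⟨n, rfl⟩
  calc |z.1 (n + r + 1) - zbar z| ≤ |z.1 (n + r + 1)| + |zbar z| := abs_sub _ _
    _ ≤ ‖z.1‖ + |zbar z| := by have := abs_apply_le z (n + r + 1); linarith

lemma g_nonneg (z : convSeqSpace) (r : ℕ) : 0 ≤ g z r :=
  le_trans (abs_nonneg _) (le_ciSup (g_bddAbove z r) 0)

lemma g_le (z : convSeqSpace) (r : ℕ) : g z r ≤ ‖z.1‖ + |zbar z| := by
  refine ciSup_le fun n => ?_
  calc |z.1 (n + r + 1) - zbar z| ≤ |z.1 (n + r + 1)| + |zbar z| := abs_sub _ _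
    _ ≤ ‖z.1‖ + |zbar z| := by have := abs_apply_le z (n + r + 1); linarith

lemma abs_le_g (z : convSeqSpace) (r : ℕ) {m : ℕ} (hm : r < m) :
    |z.1 m - zbar z| ≤ g z r := by
  have h : m = (m - r - 1) + r + 1 := by omega
  rw [h]
  exact le_ciSup (g_bddAbove z r) (m - r - 1)

lemma g_antitone (z : convSeqSpace) : Antitone (g z) := by
  intro r s hrs
  refine ciSup_le fun n => ?_
  exact abs_le_g z r (by omega)

/-- The projection `P_r`. -/
noncomputable def Pr (r : ℕ) (z : convSeqSpace) : convSeqSpace := by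
  refine ⟨⟨fun n => if n ≤ r then z.1 n else zbar z, ?_⟩, ⟨zbar z, ?_⟩⟩
  · apply memℓp_infty
    refine ⟨‖z.1‖ + |zbar z|, ?_⟩
    rintro t ⟨n, rfl⟩
    have h1 := abs_apply_le z n
    have h2 := abs_zbar_le z
    have h3 := norm_nonneg z.1
    have h5 := abs_nonneg (zbar z)
    show ‖if n ≤ r then z.1 n else zbar z‖ ≤ _
    by_cases h : n ≤ r <;> simp only [h, if_true, if_false, Real.norm_eq_abs] <;> linarith
  · apply Tendsto.congr' (f₁ := fun _ => zbar z)
    · filter_upwards [eventually_ge_atTop (r + 1)] with n hn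
      have : ¬ n ≤ r := by omega
      simp [this]
    · exact tendsto_const_nhds

lemma Pr_apply (r : ℕ) (z : convSeqSpace) (n : ℕ) :
    (Pr r z).1 n = if n ≤ r then z.1 n else zbar z := rfl

lemma dist_Pr_le (r : ℕ) (z : convSeqSpace) : dist z (Pr r z) ≤ g z r := by
  refine dist_le (g_nonneg z r) fun n => ?_
  rw [Pr_apply]
  by_cases h : n ≤ r
  · simp [h, g_nonneg z r]
  · simp only [h, if_false]
    exact abs_le_g z r (by omega)

/-- The finite-data map used for total boundedness. -/
noncomputable def ψ (r : ℕ) (z : convSeqSpace) : Fin (r + 2) → ℝ :=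
  fun i => if (i : ℕ) ≤ r then z.1 i else zbar z

lemma dist_Pr_Pr_le (r : ℕ) (z w : convSeqSpace) :
    dist (Pr r z) (Pr r w) ≤ dist (ψ r z) (ψ r w) := by
  refine dist_le dist_nonneg fun n => ?_
  rw [Pr_apply, Pr_apply]
  by_cases h : n ≤ r
  · have hn : n < r + 2 := by omega
    have := dist_le_pi_dist (ψ r z) (ψ r w) ⟨n, hn⟩
    simp only [ψ, h, if_true] at this ⊢
    simpa [Real.dist_eq] using this
  · have := dist_le_pi_dist (ψ r z) (ψ r w) ⟨r + 1, by omega⟩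
    have hr : ¬ (r + 1 ≤ r) := by omega
    simp only [ψ, hr, if_false] at this
    simpa [h, Real.dist_eq] using this

end ChiCAux

open ChiCAux in
/-- For a bounded `Q ⊆ c` and the projections
`P_r(z) = z̄ e + ∑_{n=0}^r (z_n − z̄) e^{(n)}` (with `z̄ = lim_n z_n`), one has
`(1/2) lim_r sup_{z ∈ Q} ‖(I − P_r)(z)‖_∞ ≤ χ(Q) ≤ lim_r sup_{z ∈ Q} ‖(I − P_r)(z)‖_∞`;
note `‖(I − P_r)(z)‖_∞ = sup_{n > r} |z_n − z̄|`. -/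
theorem chi_c_estimate (Q : Set convSeqSpace) (hQ : Bornology.IsBounded Q) :
    ∃ L : ℝ,
      Tendsto (fun r : ℕ =>
          sSup {t : ℝ | ∃ z ∈ Q, t = ⨆ n : ℕ,
            |z.1 (n + r + 1) - limUnder atTop (fun m => z.1 m)|})
        atTop (nhds L) ∧
      (1 / 2) * L ≤ hausdorffMNC Q ∧ hausdorffMNC Q ≤ L := by
  classical
  set f : ℕ → ℝ := fun r =>
    sSup {t : ℝ | ∃ z ∈ Q, t = ⨆ n : ℕ,
      |z.1 (n + r + 1) - limUnder atTop (fun m => z.1 m)|} with hf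
  have hset : ∀ r, {t : ℝ | ∃ z ∈ Q, t = ⨆ n : ℕ,
      |z.1 (n + r + 1) - limUnder atTop (fun m => z.1 m)|} = (fun z => g z r) '' Q := by
    intro r
    ext t
    simp only [Set.mem_setOf_eq, Set.mem_image]
    constructor
    · rintro ⟨z, hz, rfl⟩; exact ⟨z, hz, rfl⟩
    · rintro ⟨z, hz, rfl⟩; exact ⟨z, hz, rfl⟩
  have hfr : ∀ r, f r = sSup ((fun z => g z r) '' Q) := fun r => congrArg sSup (hset r)
  -- the MNC set
  set T : Set ℝ := {ε : ℝ | 0 < ε ∧ ∃ S : Finset convSeqSpace,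
      ∀ x ∈ Q, ∃ s ∈ S, dist x s < ε} with hT
  have hTne : T.Nonempty := by
    rcases Q.eq_empty_or_nonempty with hQe | ⟨z0, hz0⟩
    · exact ⟨1, one_pos, ⟨∅, by simp [hQe]⟩⟩
    · obtain ⟨C, hC⟩ := Metric.isBounded_iff.1 hQ
      refine ⟨C + 1, ?_, ⟨{z0}, fun x hx => ⟨z0, Finset.mem_singleton_self z0, ?_⟩⟩⟩
      · have := hC hz0 hz0
        simp at this
        linarith
      · have := hC hx hz0
        linarith
  have hTpos : ∀ ε ∈ T, (0:ℝ) ≤ ε := fun ε hε => le_of_lt hε.1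
  have hTbdd : BddBelow T := ⟨0, hTpos⟩
  rcases Q.eq_empty_or_nonempty with hQe | ⟨z0, hz0⟩
  · -- empty case
    refine ⟨0, ?_, ?_, ?_⟩
    · have h0 : ∀ r, f r = 0 := fun r => by rw [hfr r, hQe]; simp [Real.sSup_empty]
      exact Tendsto.congr (fun r => (h0 r).symm) tendsto_const_nhds
    · have : hausdorffMNC Q = 0 := by
        have hT0 : T = Set.Ioi 0 := by
          ext ε
          simp only [hT, Set.mem_setOf_eq, Set.mem_Ioi, hQe]
          exact ⟨fun h => h.1, fun h => ⟨h, ⟨∅, by simp⟩⟩⟩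
        rw [hausdorffMNC, ← hT, hT0, csInf_Ioi]
      rw [this]; norm_num
    · have hle : ∀ ε ∈ T, hausdorffMNC Q ≤ ε := fun ε hε => csInf_le hTbdd hε
      -- hausdorffMNC Q ≤ 0 since every positive ε is in T
      have : ∀ ε : ℝ, 0 < ε → hausdorffMNC Q ≤ ε := by
        intro ε hε
        exact hle ε ⟨hε, ⟨∅, by simp [hQe]⟩⟩
      by_contra h
      push_neg at h
      have := this (hausdorffMNC Q / 2) (by linarith)
      linarith
  -- nonempty case
  obtain ⟨C, hC⟩ := Metric.isBounded_iff.1 hQ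
  have hC0 : 0 ≤ C := by have := hC hz0 hz0; simpa using this
  set M : ℝ := ‖z0.1‖ + |zbar z0| + 2 * C with hM
  have hgM : ∀ z ∈ Q, ∀ r, g z r ≤ M := by
    intro z hz r
    have h1 : ‖z.1‖ ≤ ‖z0.1‖ + C := by
      have h2 : dist z z0 ≤ C := hC hz hz0
      have h3 : ‖z.1 - z0.1‖ ≤ C := by rwa [dist_eq] at h2
      calc ‖z.1‖ = ‖z.1 - z0.1 + z0.1‖ := by ring_nf
        _ ≤ ‖z.1 - z0.1‖ + ‖z0.1‖ := norm_add_le _ _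
        _ ≤ ‖z0.1‖ + C := by linarith
    have h4 : |zbar z| ≤ |zbar z0| + C := by
      have := abs_sub_zbar_le z z0
      have h2 : dist z z0 ≤ C := hC hz hz0
      have := abs_sub_abs_le_abs_sub (zbar z) (zbar z0)
      have habs : |zbar z - zbar z0| ≤ C := le_trans (abs_sub_zbar_le z z0) h2
      linarith [abs_sub_abs_le_abs_sub (zbar z) (zbar z0)]
    calc g z r ≤ ‖z.1‖ + |zbar z| := g_le z r
      _ ≤ M := by rw [hM]; linarith
  have hbddA : ∀ r, BddAbove ((fun z => g z r) '' Q) := by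
    intro r
    refine ⟨M, ?_⟩
    rintro t ⟨z, hz, rfl⟩
    exact hgM z hz r
  have hf_nonneg : ∀ r, 0 ≤ f r := by
    intro r
    rw [hfr]
    exact le_trans (g_nonneg z0 r) (le_csSup (hbddA r) ⟨z0, hz0, rfl⟩)
  have hf_anti : Antitone f := by
    intro r s hrs
    rw [hfr, hfr]
    refine Real.sSup_le ?_ (by rw [← hfr r]; exact hf_nonneg r)
    · rintro t ⟨z, hz, rfl⟩
      exact le_trans (g_antitone z hrs) (le_csSup (hbddA r) ⟨z, hz, rfl⟩)
  have hf_bdd : BddBelow (Set.range f) := ⟨0, by rintro t ⟨r, rfl⟩; exact hf_nonneg r⟩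
  set L : ℝ := ⨅ r, f r with hL
  have htend : Tendsto f atTop (nhds L) := tendsto_atTop_ciInf hf_anti hf_bdd
  have hLle : ∀ r, L ≤ f r := fun r => ciInf_le hf_bdd r
  have hL0 : 0 ≤ L := le_ciInf hf_nonneg
  refine ⟨L, htend, ?_, ?_⟩
  · -- lower bound : L/2 ≤ χ
    refine le_csInf hTne ?_
    rintro ε ⟨hε, S, hS⟩
    -- show L ≤ 2ε
    have key : ∀ δ : ℝ, 0 < δ → L ≤ 2 * ε + δ := by
      intro δ hδ
      -- choose r such that tails of all s ∈ S are within δ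
      have hev : ∀ᶠ n in atTop, ∀ s ∈ S, |s.1 n - zbar s| ≤ δ := by
        rw [eventually_all_finset]
        intro s _
        have := (tendsto_zbar s).sub (tendsto_const_nhds (x := zbar s))
        have habs : Tendsto (fun n => |s.1 n - zbar s|) atTop (nhds 0) := by
          simpa using this.abs
        have := habs.eventually_le_const (by linarith : (0:ℝ) < δ)
        filter_upwards [this] with n hn using hn
      obtain ⟨r0, hr0⟩ := eventually_atTop.1 hev
      have hfr0 : f r0 ≤ 2 * ε + δ := by
        rw [hfr]
        refine Real.sSup_le ?_ (by linarith)
        rintro t ⟨z, hz, rfl⟩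
        refine ciSup_le fun n => ?_
        obtain ⟨s, hsS, hsz⟩ := hS z hz
        have h1 : |z.1 (n + r0 + 1) - s.1 (n + r0 + 1)| ≤ ε := le_of_lt
          (lt_of_le_of_lt (abs_sub_apply_le z s (n + r0 + 1)) hsz)
        have h2 : |s.1 (n + r0 + 1) - zbar s| ≤ δ :=
          hr0 (n + r0 + 1) (by omega) s hsS
        have h3 : |zbar s - zbar z| ≤ ε := by
          have := abs_sub_zbar_le s z
          have hd : dist s z = dist z s := dist_comm s z
          rw [hd] at this
          linarith [le_of_lt hsz]
        have t1 := abs_sub_le (z.1 (n + r0 + 1)) (s.1 (n + r0 + 1)) (zbar z)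
        have t2 := abs_sub_le (s.1 (n + r0 + 1)) (zbar s) (zbar z)
        linarith
      exact le_trans (hLle r0) hfr0
    have hL2 : L ≤ 2 * ε := by
      by_contra h
      push_neg at h
      have := key ((L - 2 * ε) / 2) (by linarith)
      linarith
    linarith
  · -- upper bound : χ ≤ L
    have hχ : ∀ r, hausdorffMNC Q ≤ f r := by
      intro r
      have step : ∀ ε : ℝ, 0 < ε → hausdorffMNC Q ≤ f r + ε := by
        intro ε hε
        -- ψ '' Q is bounded hence totally bounded
        have hψb : Bornology.IsBounded (ψ r '' Q) := by
          rw [Metric.isBounded_iff]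
          refine ⟨C, ?_⟩
          rintro _ ⟨z, hz, rfl⟩ _ ⟨w, hw, rfl⟩
          refine dist_pi_le_iff hC0 |>.2 fun i => ?_
          by_cases h : (i : ℕ) ≤ r
          · simp only [ψ, h, if_true, Real.dist_eq]
            exact le_trans (abs_sub_apply_le z w i) (hC hz hw)
          · simp only [ψ, h, if_false, Real.dist_eq]
            exact le_trans (abs_sub_zbar_le z w) (hC hz hw)
        have hψtb : TotallyBounded (ψ r '' Q) :=
          hψb.isCompact_closure.totallyBounded.subset subset_closure
        obtain ⟨t, hts, htfin, htcov⟩ :=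
          totallyBounded_iff_subset.1 hψtb _ (Metric.dist_mem_uniformity hε)
        -- build net
        set pick : (Fin (r + 2) → ℝ) → convSeqSpace := fun y =>
          if h : ∃ w ∈ Q, ψ r w = y then Pr r h.choose else Pr r z0 with hpick
        set S : Finset convSeqSpace := htfin.toFinset.image pick with hSdef
        refine csInf_le hTbdd ⟨by linarith [hf_nonneg r], S, ?_⟩
        intro z hz
        have hzc : ψ r z ∈ ⋃ y ∈ t, {x | dist x y < ε} := htcov ⟨z, hz, rfl⟩
        obtain ⟨y, hyt, hyd⟩ := Set.mem_iUnion₂.1 hzc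
        have hyQ : ∃ w ∈ Q, ψ r w = y := by
          obtain ⟨w, hw, rfl⟩ := hts hyt
          exact ⟨w, hw, rfl⟩
        refine ⟨pick y, Finset.mem_image_of_mem pick (htfin.mem_toFinset.2 hyt), ?_⟩
        obtain ⟨hwQ, hwy⟩ := hyQ.choose_spec
        have hpy : pick y = Pr r hyQ.choose := by rw [hpick]; simp [hyQ]
        rw [hpy]
        calc dist z (Pr r hyQ.choose)
            ≤ dist z (Pr r z) + dist (Pr r z) (Pr r hyQ.choose) := dist_triangle _ _ _
          _ ≤ g z r + dist (ψ r z) (ψ r hyQ.choose) := by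
              have := dist_Pr_le r z
              have := dist_Pr_Pr_le r z hyQ.choose
              linarith [dist_Pr_le r z, dist_Pr_Pr_le r z hyQ.choose]
          _ < f r + ε := by
              have hg : g z r ≤ f r := by
                rw [hfr]; exact le_csSup (hbddA r) ⟨z, hz, rfl⟩
              have hd : dist (ψ r z) (ψ r hyQ.choose) < ε := by rw [hwy]; exact hyd
              linarith
      by_contra h
      push_neg at h
      have := step ((hausdorffMNC Q - f r) / 2) (by linarith)
      linarith
    exact le_ciInf hχ
end
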